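/- arXiv:2306.06787 — 5 statements merged into one kernel-verified Lean document; each statement's English description precedes it below -/
import Mathlib

section
/- Let W be a real vector space, let A : W × W × W × W → ℝ be a 4-linear minimal metriplectic map, and let T(x,y,z,w) := (1/3)(A(x,y,z,w) + A(x,z,w,y) + A(x,w,y,z)) be its torsion part. Then R := A − T is an algebraic curvature tensor: R is minimal metriplectic and in addition satisfies the first (algebraic) Bianchi identity R(x,y,z,w) + R(x,z,w,y) + R(x,w,y,z) = 0 for all x,y,z,w ∈ W. Moreover R induces the same 2-bracket as A, i.e. R(x,h,z,h) = A(x,h,z,h) for all x,z,h ∈ W. -/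
/-- For a 4-linear minimal metriplectic map `A` with torsion part
`T(x,y,z,w) = (1/3)(A(x,y,z,w) + A(x,z,w,y) + A(x,w,y,z))`, the map `R := A − T`
is an algebraic curvature tensor (minimal metriplectic and satisfying the first
Bianchi identity), and it induces the same 2-bracket as `A`. -/
theorem statement_2
    {W : Type*} [AddCommGroup W] [Module ℝ W]
    (A : W →ₗ[ℝ] W →ₗ[ℝ] W →ₗ[ℝ] W →ₗ[ℝ] ℝ)
    (hA1 : ∀ x y z w : W, A x y z w = - A y x z w)
    (hA2 : ∀ x y z w : W, A x y z w = - A x y w z)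
    (hA3 : ∀ x y z w : W, A x y z w = A z w x y)
    (T : W → W → W → W → ℝ)
    (hT : ∀ x y z w : W,
      T x y z w = (1/3) * (A x y z w + A x z w y + A x w y z))
    (R : W → W → W → W → ℝ)
    (hR : ∀ x y z w : W, R x y z w = A x y z w - T x y z w) :
    (∀ x y z w : W, R x y z w = - R y x z w) ∧
    (∀ x y z w : W, R x y z w = - R x y w z) ∧
    (∀ x y z w : W, R x y z w = R z w x y) ∧
    (∀ x y z w : W, R x y z w + R x z w y + R x w y z = 0) ∧
    (∀ x z h : W, R x h z h = A x h z h) := by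
  refine ⟨?_, ?_, ?_, ?_, ?_⟩
  · intro x y z w
    simp only [hR, hT]
    linarith [hA1 x y z w, hA3 y z w x, hA1 w x y z, hA3 y w x z, hA2 x z w y, hA1 x z w y, hA2 y w x z]
  · intro x y z w
    simp only [hR, hT]
    linarith [hA2 x y z w, hA2 x w y z, hA2 x z w y]
  · intro x y z w
    simp only [hR, hT]
    linarith [hA3 x y z w, hA1 z x y w, hA2 x z y w, hA1 z y w x, hA3 y z w x, hA1 w x y z]
  · intro x y z w
    simp only [hR, hT]; ring
  · intro x y z
    simp only [hR, hT]
    linarith [hA2 x y z z, hA2 x z y z]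
end

section
/- Let W be a real vector space and let σ and μ be positive definite symmetric bilinear forms on W. If x, y ∈ W are linearly independent, then the sectional curvature of the Kulkarni–Nomizu product is strictly positive: (σ ∧ μ)(x,y,x,y) = σ(x,x)μ(y,y) + μ(x,x)σ(y,y) − 2σ(x,y)μ(x,y) > 0. Consequently, for positive definite σ and μ, (σ ∧ μ)(x,y,x,y) = 0 if and only if x and y are linearly dependent. -/
/-!
For independent `x, y` the strict Cauchy–Schwarz inequalities for `σ` and `μ`, multiplied together
and combined with AM–GM, give
`(2 σ(x,y) μ(x,y))² < 4 σ(x,x) σ(y,y) μ(x,x) μ(y,y) ≤ (σ(x,x) μ(y,y) + μ(x,x) σ(y,y))²`,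
hence `K(x, y) > 0`. For a dependent pair `y = a • x` the four terms of `K(x, y)` cancel,
whatever the bilinear forms.
-/

def kulkarniNomizu {W : Type*} [AddCommGroup W] [Module ℝ W]
    (σ μ : W →ₗ[ℝ] W →ₗ[ℝ] ℝ) (x y z w : W) : ℝ :=
  σ x z * μ y w - σ x w * μ y z + μ x z * σ y w - μ x w * σ y z

theorem two_mul_mul_lt_add_of_sq_lt {R : Type*} [CommRing R] [LinearOrder R]
    [IsStrictOrderedRing R] {a b c d p q : R} (ha : 0 ≤ a) (hc : 0 ≤ c)
    (hp : p ^ 2 < a * b) (hq : q ^ 2 < c * d) :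
    2 * (p * q) < a * d + c * b := by
  have hb : 0 < b := pos_of_mul_pos_right ((sq_nonneg p).trans_lt hp) ha
  have hd : 0 < d := pos_of_mul_pos_right ((sq_nonneg q).trans_lt hq) hc
  have hpq : (p * q) ^ 2 < a * b * (c * d) := by
    rw [mul_pow]
    exact mul_lt_mul'' hp hq (sq_nonneg p) (sq_nonneg q)
  have hsq : (2 * (p * q)) ^ 2 < (a * d + c * b) ^ 2 := by
    nlinarith [sq_nonneg (a * d - c * b)]
  exact lt_of_pow_lt_pow_left₀ 2 (by positivity) hsq

section

variable {W : Type*} [AddCommGroup W] [Module ℝ W] (σ μ : W →ₗ[ℝ] W →ₗ[ℝ] ℝ)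

theorem kulkarniNomizu_self_eq (hσ : ∀ x y : W, σ x y = σ y x) (hμ : ∀ x y : W, μ x y = μ y x)
    (x y : W) :
    kulkarniNomizu σ μ x y x y = σ x x * μ y y + μ x x * σ y y - 2 * (σ x y * μ x y) := by
  rw [kulkarniNomizu, hσ y x, hμ y x]
  ring

theorem kulkarniNomizu_self_pos (hσ : ∀ x y : W, σ x y = σ y x) (hμ : ∀ x y : W, μ x y = μ y x)
    (hσpos : ∀ x : W, x ≠ 0 → 0 < σ x x) (hμpos : ∀ x : W, x ≠ 0 → 0 < μ x x) {x y : W}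
    (h : LinearIndependent ℝ ![x, y]) :
    0 < kulkarniNomizu σ μ x y x y := by
  have hx : x ≠ 0 := h.ne_zero 0
  have hσxy := (LinearMap.BilinForm.apply_sq_lt_iff_linearIndependent_of_symm σ hσpos ⟨hσ⟩ x y).mpr h
  have hμxy := (LinearMap.BilinForm.apply_sq_lt_iff_linearIndependent_of_symm μ hμpos ⟨hμ⟩ x y).mpr h
  rw [kulkarniNomizu_self_eq σ μ hσ hμ, sub_pos]
  exact two_mul_mul_lt_add_of_sq_lt (hσpos x hx).le (hμpos x hx).le hσxy hμxy

theorem kulkarniNomizu_self_eq_zero_of_not_linearIndependent {x y : W}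
    (h : ¬ LinearIndependent ℝ ![x, y]) :
    kulkarniNomizu σ μ x y x y = 0 := by
  rcases eq_or_ne x 0 with rfl | hx
  · simp [kulkarniNomizu]
  obtain ⟨a, rfl⟩ : ∃ a : ℝ, a • x = y := by
    simpa [LinearIndependent.pair_iff' hx] using h
  simp only [kulkarniNomizu, map_smul, LinearMap.smul_apply, smul_eq_mul]
  ring

end

/-- For positive definite symmetric bilinear forms `σ` and `μ`, the
sectional curvature of the Kulkarni–Nomizu product is strictly positive on
linearly independent pairs, and it vanishes exactly on linearly dependent pairs. -/
theorem statement_9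
    {W : Type*} [AddCommGroup W] [Module ℝ W]
    (σ μ : W →ₗ[ℝ] W →ₗ[ℝ] ℝ)
    (hσ : ∀ x y : W, σ x y = σ y x)
    (hμ : ∀ x y : W, μ x y = μ y x)
    (hσpos : ∀ x : W, x ≠ 0 → 0 < σ x x)
    (hμpos : ∀ x : W, x ≠ 0 → 0 < μ x x) :
    (∀ x y : W, LinearIndependent ℝ ![x, y] →
      kulkarniNomizu σ μ x y x y
        = σ x x * μ y y + μ x x * σ y y - 2 * (σ x y * μ x y) ∧
      0 < kulkarniNomizu σ μ x y x y) ∧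
    (∀ x y : W,
      kulkarniNomizu σ μ x y x y = 0 ↔ ¬ LinearIndependent ℝ ![x, y]) := by
  refine ⟨fun x y h ↦ ⟨kulkarniNomizu_self_eq σ μ hσ hμ x y,
    kulkarniNomizu_self_pos σ μ hσ hμ hσpos hμpos h⟩, fun x y ↦ ⟨?_, ?_⟩⟩
  · exact fun h0 h ↦ (kulkarniNomizu_self_pos σ μ hσ hμ hσpos hμpos h).ne' h0
  · exact kulkarniNomizu_self_eq_zero_of_not_linearIndependent σ μ
end

section
/- Let U ⊆ ℝⁿ be open, let J : U → Matrix(n,n,ℝ) be a smooth antisymmetric matrix field, and let g : U → Matrix(n,n,ℝ) be a smooth symmetric matrix field that is invertible at every point, with pointwise inverse g_{kl}. Define the contravariant Christoffel symbols Γ^{ij}_l := (1/2) g_{kl} [ Jⁱˢ ∂g^{jk}/∂z^s − Jᵏˢ ∂gⁱʲ/∂z^s + Jʲˢ ∂g^{ik}/∂z^s ] + (1/2) g_{kl} [ g^{ks} ∂Jⁱʲ/∂z^s − g^{si} ∂J^{jk}/∂z^s − g^{sj} ∂J^{ik}/∂z^s ] (summation over repeated indices). Then the metric compatibility condition holds at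 every point of U: Jⁱˢ ∂g^{jk}/∂z^s = g^{ks} Γ^{ij}_s + g^{js} Γ^{ik}_s for all indices i,j,k. -/
open Matrix


/-- The partial derivative `∂f/∂z^s` at `z` of a function `f : ℝⁿ → ℝ`. -/
noncomputable def pderiv' {n : ℕ} (f : (Fin n → ℝ) → ℝ) (s : Fin n)
    (z : Fin n → ℝ) : ℝ :=
  fderiv ℝ f z (Pi.single s 1)

/-- The contravariant Levi-Civita Christoffel symbols `Γ^{ij}_l` built from an
antisymmetric bivector field `J` and a contravariant metric `g` with pointwise
inverse `ginv`:
`Γ^{ij}_l = (1/2) g_{kl} [ Jⁱˢ ∂ₛg^{jk} − Jᵏˢ ∂ₛgⁱʲ + Jʲˢ ∂ₛg^{ik} ]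
          + (1/2) g_{kl} [ g^{ks} ∂ₛJⁱʲ − g^{si} ∂ₛJ^{jk} − g^{sj} ∂ₛJ^{ik} ]`,
with summation over the repeated indices `k` and `s`. -/
noncomputable def contravariantChristoffel {n : ℕ}
    (J g ginv : (Fin n → ℝ) → Matrix (Fin n) (Fin n) ℝ)
    (i j l : Fin n) (z : Fin n → ℝ) : ℝ :=
  (1/2) * ∑ k, ginv z k l *
      (∑ s, (J z i s * pderiv' (fun w => g w j k) s z
            - J z k s * pderiv' (fun w => g w i j) s z
            + J z j s * pderiv' (fun w => g w i k) s z))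
  + (1/2) * ∑ k, ginv z k l *
      (∑ s, (g z k s * pderiv' (fun w => J w i j) s z
            - g z s i * pderiv' (fun w => J w j k) s z
            - g z s j * pderiv' (fun w => J w i k) s z))

/-- Contraction of `g` against `∑ m, ginv m s * F m` gives back `F`, when `ginv`
is a two-sided inverse of the symmetric matrix `g`. -/
lemma contract_aux {n : ℕ} (g ginv : Matrix (Fin n) (Fin n) ℝ)
    (h1 : g * ginv = 1) (h2 : ginv * g = 1) (hs : gᵀ = g)
    (F : Fin n → ℝ) (a : Fin n) :
    ∑ s, g a s * ∑ m, ginv m s * F m = F a := by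
  have hg' : ginvᵀ * g = 1 := by
    calc ginvᵀ * g = ginvᵀ * gᵀ := by rw [hs]
      _ = (g * ginv)ᵀ := by rw [Matrix.transpose_mul]
      _ = 1 := by rw [h1, Matrix.transpose_one]
  have hinvs : ginvᵀ = ginv := by
    calc ginvᵀ = ginvᵀ * (g * ginv) := by rw [h1, mul_one]
      _ = (ginvᵀ * g) * ginv := by rw [mul_assoc]
      _ = ginv := by rw [hg', one_mul]
  have hsym : ∀ m s, ginv m s = ginv s m := by
    intro m s
    have h := congrFun (congrFun hinvs m) s
    simpa [Matrix.transpose_apply] using h.symm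
  calc ∑ s, g a s * ∑ m, ginv m s * F m
      = ∑ s, ∑ m, g a s * ginv s m * F m := by
        refine Finset.sum_congr rfl fun s _ => ?_
        rw [Finset.mul_sum]
        refine Finset.sum_congr rfl fun m _ => ?_
        rw [hsym m s]; ring
    _ = ∑ m, (∑ s, g a s * ginv s m) * F m := by
        rw [Finset.sum_comm]
        refine Finset.sum_congr rfl fun m _ => ?_
        rw [Finset.sum_mul]
    _ = ∑ m, (g * ginv) a m * F m := by
        refine Finset.sum_congr rfl fun m _ => ?_
        rw [Matrix.mul_apply]
    _ = F a := by
        rw [h1]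
        simp [Matrix.one_apply]

/-- For a smooth antisymmetric matrix field `J` and a smooth symmetric
pointwise-invertible matrix field `g` on an open set `U ⊆ ℝⁿ`, the contravariant
Christoffel symbols satisfy the metric compatibility condition
`Jⁱˢ ∂g^{jk}/∂z^s = g^{ks} Γ^{ij}_s + g^{js} Γ^{ik}_s` on `U`. -/
theorem statement_14
    {n : ℕ} (U : Set (Fin n → ℝ)) (hU : IsOpen U)
    (J g ginv : (Fin n → ℝ) → Matrix (Fin n) (Fin n) ℝ)
    (hJsmooth : ∀ i j : Fin n, ContDiffOn ℝ (⊤ : ℕ∞) (fun z => J z i j) U)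
    (hgsmooth : ∀ i j : Fin n, ContDiffOn ℝ (⊤ : ℕ∞) (fun z => g z i j) U)
    (hJanti : ∀ z ∈ U, ∀ i j : Fin n, J z i j = - J z j i)
    (hgsymm : ∀ z ∈ U, ∀ i j : Fin n, g z i j = g z j i)
    (hginv : ∀ z ∈ U, g z * ginv z = 1 ∧ ginv z * g z = 1) :
    ∀ z ∈ U, ∀ i j k : Fin n,
      ∑ s, J z i s * pderiv' (fun w => g w j k) s z
        = ∑ s, (g z k s * contravariantChristoffel J g ginv i j s z
              + g z j s * contravariantChristoffel J g ginv i k s z) := by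
  intro z hz i j k
  have hzU : U ∈ nhds z := hU.mem_nhds hz
  -- derivative of g is symmetric in the matrix indices
  have hdg : ∀ a b s, pderiv' (fun w => g w a b) s z = pderiv' (fun w => g w b a) s z := by
    intro a b s
    unfold pderiv'
    congr 1
    apply Filter.EventuallyEq.fderiv_eq
    filter_upwards [hzU] with w hw
    exact hgsymm w hw a b
  -- derivative of J is antisymmetric in the matrix indices
  have hdJ : ∀ a b s, pderiv' (fun w => J w a b) s z = - pderiv' (fun w => J w b a) s z := by
    intro a b s
    unfold pderiv'
    have h : fderiv ℝ (fun w => J w a b) z = fderiv ℝ (fun w => -(J w b a)) z := by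
      apply Filter.EventuallyEq.fderiv_eq
      filter_upwards [hzU] with w hw
      exact hJanti w hw a b
    rw [h, fderiv_fun_neg]
    simp
  have hgs := hgsymm z hz
  have hgt : (g z)ᵀ = g z := by
    ext a b
    exact hgs b a
  obtain ⟨h1, h2⟩ := hginv z hz
  -- the key contraction identity
  have hcontr : ∀ a i' j',
      ∑ s, g z a s * contravariantChristoffel J g ginv i' j' s z
      = (1/2) * (∑ s, (J z i' s * pderiv' (fun w => g w j' a) s z
            - J z a s * pderiv' (fun w => g w i' j') s z
            + J z j' s * pderiv' (fun w => g w i' a) s z))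
      + (1/2) * (∑ s, (g z a s * pderiv' (fun w => J w i' j') s z
            - g z s i' * pderiv' (fun w => J w j' a) s z
            - g z s j' * pderiv' (fun w => J w i' a) s z)) := by
    intro a i' j'
    set F : Fin n → ℝ := fun m =>
      (1/2) * (∑ s, (J z i' s * pderiv' (fun w => g w j' m) s z
            - J z m s * pderiv' (fun w => g w i' j') s z
            + J z j' s * pderiv' (fun w => g w i' m) s z))
      + (1/2) * (∑ s, (g z m s * pderiv' (fun w => J w i' j') s z
            - g z s i' * pderiv' (fun w => J w j' m) s z
            - g z s j' * pderiv' (fun w => J w i' m) s z)) with hF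
    have hGam : ∀ l, contravariantChristoffel J g ginv i' j' l z = ∑ m, ginv z m l * F m := by
      intro l
      unfold contravariantChristoffel
      rw [hF]
      rw [Finset.mul_sum, Finset.mul_sum, ← Finset.sum_add_distrib]
      refine Finset.sum_congr rfl fun m _ => ?_
      ring
    calc ∑ s, g z a s * contravariantChristoffel J g ginv i' j' s z
        = ∑ s, g z a s * ∑ m, ginv z m s * F m := by
          refine Finset.sum_congr rfl fun s _ => ?_
          rw [hGam s]
      _ = F a := contract_aux (g z) (ginv z) h1 h2 hgt F a
  rw [Finset.sum_add_distrib, hcontr k i j, hcontr j i k]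
  rw [Finset.mul_sum, Finset.mul_sum, Finset.mul_sum, Finset.mul_sum,
    ← Finset.sum_add_distrib, ← Finset.sum_add_distrib, ← Finset.sum_add_distrib]
  refine Finset.sum_congr rfl fun s _ => ?_
  rw [hdg k j s, hdJ k j s, hgs s i, hgs s j, hgs s k]
  ring
end

section
/- Let U ⊆ ℝⁿ be open, let J : U → Matrix(n,n,ℝ) be a smooth antisymmetric matrix field, let g : U → Matrix(n,n,ℝ) be a smooth symmetric matrix field, and let Γ^{ij}_k : U → ℝ be smooth functions satisfying the metric compatibility condition Jⁱˢ ∂g^{jk}/∂z^s = g^{ks} Γ^{ij}_s + g^{js} Γ^{ik}_s on U. Suppose S : U → ℝ is a smooth Casimir function, i.e. Σ_j Jⁱʲ ∂S/∂z^j ≡ 0 on U for every i. Then for all smooth f, h : U → ℝ, the bilinear antisymmetry g(D_{dS} df, dh) = −g(df, D_{dS} dh) holds; in coordinates, at every point of U: Σ (∂S/∂z^i)(∂f/∂z^j) Γ^{ij}_s g^{sk} (∂h/∂z^k) + Σ (∂S/∂z^i)(∂h/∂z^j) Γ^{ij}_s g^{sk} (∂f/∂z^k) = 0. -/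
/-- For a smooth antisymmetric matrix field `J`, a smooth symmetric
matrix field `g`, and smooth Christoffel symbols `Γ` satisfying metric
compatibility `Jⁱˢ ∂ₛg^{jk} = g^{ks} Γ^{ij}_s + g^{js} Γ^{ik}_s` on an open
`U ⊆ ℝⁿ`, and a smooth Casimir `S` of `J`, the antisymmetry
`g(D_{dS} df, dh) = −g(df, D_{dS} dh)` holds for all smooth `f, h`; in
coordinates, at every point of `U`:
`Σ ∂ᵢS ∂ⱼf Γ^{ij}_s g^{sk} ∂ₖh + Σ ∂ᵢS ∂ⱼh Γ^{ij}_s g^{sk} ∂ₖf = 0`. -/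
theorem statement_16
    {n : ℕ} (U : Set (Fin n → ℝ)) (hU : IsOpen U)
    (J g : (Fin n → ℝ) → Matrix (Fin n) (Fin n) ℝ)
    (Γ : Fin n → Fin n → Fin n → (Fin n → ℝ) → ℝ)
    (hJsmooth : ∀ i j : Fin n, ContDiffOn ℝ (⊤ : ℕ∞) (fun z => J z i j) U)
    (hgsmooth : ∀ i j : Fin n, ContDiffOn ℝ (⊤ : ℕ∞) (fun z => g z i j) U)
    (hΓsmooth : ∀ i j k : Fin n, ContDiffOn ℝ (⊤ : ℕ∞) (Γ i j k) U)
    (hJanti : ∀ z ∈ U, ∀ i j : Fin n, J z i j = - J z j i)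
    (hgsymm : ∀ z ∈ U, ∀ i j : Fin n, g z i j = g z j i)
    (hcompat : ∀ z ∈ U, ∀ i j k : Fin n,
      ∑ s, J z i s * pderiv' (fun w => g w j k) s z
        = ∑ s, (g z k s * Γ i j s z + g z j s * Γ i k s z))
    (S : (Fin n → ℝ) → ℝ)
    (hSsmooth : ContDiffOn ℝ (⊤ : ℕ∞) S U)
    (hCasimir : ∀ z ∈ U, ∀ i : Fin n, ∑ j, J z i j * pderiv' S j z = 0) :
    ∀ f h : (Fin n → ℝ) → ℝ, ContDiffOn ℝ (⊤ : ℕ∞) f U → ContDiffOn ℝ (⊤ : ℕ∞) h U →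
      ∀ z ∈ U,
        (∑ i, ∑ j, ∑ s, ∑ k,
          pderiv' S i z * pderiv' f j z * Γ i j s z * g z s k * pderiv' h k z)
        + (∑ i, ∑ j, ∑ s, ∑ k,
          pderiv' S i z * pderiv' h j z * Γ i j s z * g z s k * pderiv' f k z)
        = 0 := by
  intro f h hf hh z hz
  set a := fun i => pderiv' S i z with ha
  set b := fun i => pderiv' f i z with hb
  set c := fun i => pderiv' h i z with hc
  set D := fun (j k s : Fin n) => pderiv' (fun w => g w j k) s z with hD
  -- Casimir + antisymmetry: ∑ i, a i * J z i s = 0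
  have aux : ∀ s : Fin n, (∑ i, a i * J z i s) = 0 := by
    intro s
    have h1 := hCasimir z hz s
    calc (∑ i, a i * J z i s) = ∑ i, -(J z s i * pderiv' S i z) := by
          refine Finset.sum_congr rfl fun i _ => ?_
          rw [hJanti z hz i s]; ring
      _ = -(∑ i, J z s i * pderiv' S i z) := by rw [Finset.sum_neg_distrib]
      _ = 0 := by rw [h1, neg_zero]
  -- rewrite first big sum
  have e1 : (∑ i, ∑ j, ∑ s, ∑ k, a i * b j * Γ i j s z * g z s k * c k)
      = ∑ i, ∑ j, ∑ k, a i * b j * c k * (∑ s, g z k s * Γ i j s z) := by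
    refine Finset.sum_congr rfl fun i _ => Finset.sum_congr rfl fun j _ => ?_
    rw [Finset.sum_comm]
    refine Finset.sum_congr rfl fun k _ => ?_
    rw [Finset.mul_sum]
    refine Finset.sum_congr rfl fun s _ => ?_
    rw [hgsymm z hz k s]; ring
  have e2 : (∑ i, ∑ j, ∑ s, ∑ k, a i * c j * Γ i j s z * g z s k * b k)
      = ∑ i, ∑ j, ∑ k, a i * b j * c k * (∑ s, g z j s * Γ i k s z) := by
    refine Finset.sum_congr rfl fun i _ => ?_
    rw [show (∑ j, ∑ s, ∑ k, a i * c j * Γ i j s z * g z s k * b k)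
        = ∑ j, ∑ k, ∑ s, a i * c j * Γ i j s z * g z s k * b k from
      Finset.sum_congr rfl fun j _ => Finset.sum_comm]
    rw [Finset.sum_comm]
    refine Finset.sum_congr rfl fun j _ => Finset.sum_congr rfl fun k _ => ?_
    rw [Finset.mul_sum]
    refine Finset.sum_congr rfl fun s _ => ?_
    rw [hgsymm z hz j s]; ring
  rw [e1, e2, ← Finset.sum_add_distrib]
  have e3 : (∑ i, ((∑ j, ∑ k, a i * b j * c k * (∑ s, g z k s * Γ i j s z))
      + ∑ j, ∑ k, a i * b j * c k * (∑ s, g z j s * Γ i k s z)))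
      = ∑ i, ∑ j, ∑ k, a i * b j * c k * (∑ s, J z i s * D j k s) := by
    refine Finset.sum_congr rfl fun i _ => ?_
    rw [← Finset.sum_add_distrib]
    refine Finset.sum_congr rfl fun j _ => ?_
    rw [← Finset.sum_add_distrib]
    refine Finset.sum_congr rfl fun k _ => ?_
    rw [← mul_add, ← Finset.sum_add_distrib, ← hcompat z hz i j k]
  rw [e3]
  -- now reorganize to pull out ∑ i a i * J z i s
  have e4 : (∑ i, ∑ j, ∑ k, a i * b j * c k * (∑ s, J z i s * D j k s))
      = ∑ s, (∑ i, a i * J z i s) * (∑ j, ∑ k, b j * c k * D j k s) := by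
    have step : ∀ i, (∑ j, ∑ k, a i * b j * c k * (∑ s, J z i s * D j k s))
        = ∑ s, (a i * J z i s) * (∑ j, ∑ k, b j * c k * D j k s) := by
      intro i
      calc (∑ j, ∑ k, a i * b j * c k * (∑ s, J z i s * D j k s))
          = ∑ j, ∑ k, ∑ s, (a i * J z i s) * (b j * c k * D j k s) := by
            refine Finset.sum_congr rfl fun j _ => Finset.sum_congr rfl fun k _ => ?_
            rw [Finset.mul_sum]
            exact Finset.sum_congr rfl fun s _ => by ring
        _ = ∑ j, ∑ s, ∑ k, (a i * J z i s) * (b j * c k * D j k s) :=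
            Finset.sum_congr rfl fun j _ => Finset.sum_comm
        _ = ∑ s, ∑ j, ∑ k, (a i * J z i s) * (b j * c k * D j k s) := Finset.sum_comm
        _ = ∑ s, (a i * J z i s) * (∑ j, ∑ k, b j * c k * D j k s) := by
            refine Finset.sum_congr rfl fun s _ => ?_
            rw [Finset.mul_sum]
            exact Finset.sum_congr rfl fun j _ => (Finset.mul_sum _ _ _).symm
    calc (∑ i, ∑ j, ∑ k, a i * b j * c k * (∑ s, J z i s * D j k s))
        = ∑ i, ∑ s, (a i * J z i s) * (∑ j, ∑ k, b j * c k * D j k s) :=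
          Finset.sum_congr rfl fun i _ => step i
      _ = ∑ s, ∑ i, (a i * J z i s) * (∑ j, ∑ k, b j * c k * D j k s) := Finset.sum_comm
      _ = ∑ s, (∑ i, a i * J z i s) * (∑ j, ∑ k, b j * c k * D j k s) :=
          Finset.sum_congr rfl fun s _ => (Finset.sum_mul _ _ _).symm
  rw [e4]
  simp [aux]
end

section
/- Let U ⊆ ℝⁿ be open, let S : U → ℝ be smooth with nowhere-vanishing gradient ∇S (i.e. ∇S(z) ≠ 0 for all z ∈ U), and let Ĝ : U → Matrix(n,n,ℝ) be smooth. Then there exists a smooth map G : U → Matrix(n,n,ℝ) such that G(z) is a symmetric matrix for every z ∈ U and G(z) ∇S(z) = Ĝ(z) ∇S(z) for every z ∈ U. (An explicit choice is G = (Y (∇S)ᵀ + ∇S Yᵀ)/‖∇S‖² − (∇S·Y) ∇S (∇S)ᵀ/‖∇S‖⁴ with Y := Ĝ ∇S.) -/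
open Matrix

/-- The Euclidean gradient of `S : ℝⁿ → ℝ` at `z`, with components
`(∇S)_i = ∂S/∂z^i`. -/
noncomputable def euclGradient {n : ℕ} (S : (Fin n → ℝ) → ℝ)
    (z : Fin n → ℝ) : Fin n → ℝ :=
  fun i => fderiv ℝ S z (Pi.single i 1)

/-- On an open `U ⊆ ℝⁿ`, given a smooth function `S` with nowhere
vanishing gradient and a smooth (not necessarily symmetric) matrix field `Ĝ`,
there exists a smooth symmetric matrix field `G` generating the same dissipative
dynamics: `G ∇S = Ĝ ∇S` pointwise on `U`. -/
theorem statement_18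
    {n : ℕ} (U : Set (Fin n → ℝ)) (hU : IsOpen U)
    (S : (Fin n → ℝ) → ℝ) (hSsmooth : ContDiffOn ℝ (⊤ : ℕ∞) S U)
    (hgrad : ∀ z ∈ U, euclGradient S z ≠ 0)
    (Ghat : (Fin n → ℝ) → Matrix (Fin n) (Fin n) ℝ)
    (hGhat : ∀ i j : Fin n, ContDiffOn ℝ (⊤ : ℕ∞) (fun z => Ghat z i j) U) :
    ∃ G : (Fin n → ℝ) → Matrix (Fin n) (Fin n) ℝ,
      (∀ i j : Fin n, ContDiffOn ℝ (⊤ : ℕ∞) (fun z => G z i j) U) ∧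
      (∀ z ∈ U, ∀ i j : Fin n, G z i j = G z j i) ∧
      (∀ z ∈ U, G z *ᵥ euclGradient S z = Ghat z *ᵥ euclGradient S z) := by
  set g : (Fin n → ℝ) → Fin n → ℝ := euclGradient S with hgdef
  -- smoothness of gradient components
  have hgsm : ∀ i : Fin n, ContDiffOn ℝ (⊤ : ℕ∞) (fun z => g z i) U := by
    intro i
    have hfd : ContDiffOn ℝ (⊤ : ℕ∞) (fun z => fderiv ℝ S z) U :=
      hSsmooth.fderiv_of_isOpen hU (by simp)
    have := (ContinuousLinearMap.apply ℝ ℝ (Pi.single i 1 : Fin n → ℝ)).contDiff.comp_contDiffOn hfd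
    exact this
  -- Y = Ghat ∇S
  set Y : (Fin n → ℝ) → Fin n → ℝ := fun z i => ∑ j, Ghat z i j * g z j with hYdef
  have hYsm : ∀ i : Fin n, ContDiffOn ℝ (⊤ : ℕ∞) (fun z => Y z i) U := by
    intro i
    exact ContDiffOn.sum fun j _ => (hGhat i j).mul (hgsm j)
  set q : (Fin n → ℝ) → ℝ := fun z => ∑ j, g z j * g z j with hqdef
  have hqsm : ContDiffOn ℝ (⊤ : ℕ∞) q U := ContDiffOn.sum fun j _ => (hgsm j).mul (hgsm j)
  have hqne : ∀ z ∈ U, q z ≠ 0 := by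
    intro z hz h
    exact hgrad z hz (dotProduct_self_eq_zero.mp h)
  set c : (Fin n → ℝ) → ℝ := fun z => ∑ j, g z j * Y z j with hcdef
  have hcsm : ContDiffOn ℝ (⊤ : ℕ∞) c U := ContDiffOn.sum fun j _ => (hgsm j).mul (hYsm j)
  refine ⟨fun z i j => (Y z i * g z j + g z i * Y z j) / q z
      - c z * (g z i * g z j) / (q z)^2, ?_, ?_, ?_⟩
  · intro i j
    refine ContDiffOn.sub (ContDiffOn.div (((hYsm i).mul (hgsm j)).add ((hgsm i).mul (hYsm j))) hqsm hqne) (ContDiffOn.div (hcsm.mul ((hgsm i).mul (hgsm j))) (hqsm.pow 2) ?_)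
    intro z hz
    exact pow_ne_zero 2 (hqne z hz)
  · intro z hz i j
    ring
  · intro z hz
    funext i
    have hq := hqne z hz
    show ∑ j, ((Y z i * g z j + g z i * Y z j) / q z
      - c z * (g z i * g z j) / (q z)^2) * g z j = ∑ j, Ghat z i j * g z j
    have expand : ∀ j : Fin n, ((Y z i * g z j + g z i * Y z j) / q z
        - c z * (g z i * g z j) / (q z)^2) * g z j
        = (Y z i / q z) * (g z j * g z j) + (g z i / q z) * (g z j * Y z j)
          - (c z * g z i / (q z)^2) * (g z j * g z j) := by
      intro j; ring
    rw [Finset.sum_congr rfl (fun j _ => expand j)]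
    rw [Finset.sum_sub_distrib, Finset.sum_add_distrib, ← Finset.mul_sum, ← Finset.mul_sum,
      ← Finset.mul_sum]
    have hsum1 : ∑ j, g z j * g z j = q z := rfl
    have hsum2 : ∑ j, g z j * Y z j = c z := rfl
    rw [hsum1, hsum2]
    have : Y z i = ∑ j, Ghat z i j * g z j := rfl
    rw [← this]
    field_simp
    ring
end
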